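/- In an ARIF loop, (xⁱ·yᵐ)·(yⁿ·xʲ) = xⁱ·(y^{m+n}·xʲ) for all x, y and all integers i, j, m, n (where xⁱ·y^{m+n}·xʲ is unambiguous by flexibility and power alternativity). -/

import Mathlib

/-- A loop: a magma with two-sided identity and left/right division. -/
class Loop (M : Type*) extends Mul M, One M where
  ld : M → M → M
  rd : M → M → M
  mul_ld : ∀ x y : M, x * ld x y = y
  ld_mul : ∀ x y : M, ld x (x * y) = y
  rd_mul : ∀ x y : M, rd y x * x = y
  mul_rd : ∀ x y : M, rd (y * x) x = y
  one_mul : ∀ x : M, 1 * x = x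
  mul_one : ∀ x : M, x * 1 = x

/-- An inverse property (IP) loop. -/
class IPLoop (M : Type*) extends Loop M, Inv M where
  inv_mul_cancel_left : ∀ x y : M, x⁻¹ * (x * y) = y
  mul_inv_cancel_right : ∀ x y : M, (y * x) * x⁻¹ = y

/-- Left translation `L(x) : y ↦ x * y` as a permutation. -/
def Loop.Lperm {M : Type*} [Loop M] (x : M) : Equiv.Perm M :=
  ⟨fun y => x * y, fun y => Loop.ld x y, Loop.ld_mul x, Loop.mul_ld x⟩

/-- Right translation `R(x) : y ↦ y * x` as a permutation. -/
def Loop.Rperm {M : Type*} [Loop M] (x : M) : Equiv.Perm M :=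
  ⟨fun y => y * x, fun y => Loop.rd y x, fun y => Loop.mul_rd x y, fun y => Loop.rd_mul x y⟩

/-- Integer powers: `xⁿ = 1 · L(x)ⁿ`. -/
def Loop.pow {M : Type*} [Loop M] (x : M) (n : ℤ) : M := (Loop.Lperm x ^ n) 1

/-!
Power alternativity `L(xⁿ) = L(x)ⁿ`, `R(xⁿ) = R(x)ⁿ` comes first: instantiating the ARIF laws
at two powers `xᵖ, x^q` shows that the set of good exponents is closed under
`(p, q, 2p + q) ↦ p + 2q`, which together with `0`, `1` and `k ↦ -k` generates `ℤ`.

For the main identity, write `P(m, n)` for `(xⁱyᵐ)(yⁿxʲ) = xⁱ(y^{m+n}xʲ)` for all `x, y, i, j`.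
Inverting both sides (antiautomorphic inverse property) and replacing `y` by `y⁻¹` give the
symmetries `P(m, n) → P(-n, -m)` and `P(m, n) → P(-m, -n)`. The left ARIF law, applied to
`u = y^{-(m+1)}x^{-i}` and `v = xⁱy^{m+2}` (so that `uv = y`), gives
`P(m+1, n), P(m, n+1), P(m+2, n+1) → P(m+3, n)`. Inducting along the anti-diagonals
`m + n = σ` from `P(0, n)`, `P(m, 0)` and `P(m, -m)` then reaches every `(m, n)`.
-/

/-- The right ARIF law `R(x)R(yxy) = R(xyx)R(y)`, with maps acting on the right. -/
def IsRightARIF (M : Type*) [Mul M] : Prop :=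
  ∀ x y z : M, (z * x) * (y * (x * y)) = (z * (x * (y * x))) * y

/-- The left ARIF law `L(x)L(yxy) = L(xyx)L(y)`, with maps acting on the right. -/
def IsLeftARIF (M : Type*) [Mul M] : Prop :=
  ∀ x y z : M, (y * (x * y)) * (x * z) = y * ((x * (y * x)) * z)

def IsFlexible (M : Type*) [Mul M] : Prop :=
  ∀ x y : M, x * (y * x) = (x * y) * x

structure IsARIF (M : Type*) [Mul M] : Prop where
  flexible : IsFlexible M
  right : IsRightARIF M
  left : IsLeftARIF M

lemma Int.forall_of_add_two_mul_closed {S : ℤ → Prop} (h0 : S 0) (h1 : S 1)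
    (hneg : ∀ k, S k → S (-k))
    (hstep : ∀ p q, S p → S q → S (2 * p + q) → S (p + 2 * q)) :
    ∀ k, S k := by
  suffices hnat : ∀ n : ℕ, S n by
    intro k
    obtain ⟨n, rfl | rfl⟩ := Int.eq_nat_or_neg k
    exacts [hnat n, hneg _ (hnat n)]
  intro n
  induction n using Nat.strong_induction_on with
  | _ n ih =>
  obtain ⟨m, rfl | rfl⟩ := Nat.even_or_odd' n
  · rcases m.eq_zero_or_pos with rfl | hm
    · exact h0
    · have hm' := ih m (by omega)
      simpa [two_mul] using hstep 0 m h0 hm' (by simpa using hm')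
  · match m with
    | 0 => simpa using h1
    | m + 1 =>
      have := hstep (-1) (m + 2) (hneg 1 h1) (by exact_mod_cast ih (m + 2) (by omega))
        (by simpa [add_comm] using ih m (by omega))
      convert this using 1
      push_cast; ring

open Loop

namespace IPLoop

variable {M : Type*} [IPLoop M]

lemma inv_eq_of_mul_eq_one {a b : M} (h : a * b = 1) : a⁻¹ = b := by
  simpa [h, Loop.mul_one] using inv_mul_cancel_left a b

lemma mul_inv_rev (a b : M) : (a * b)⁻¹ = b⁻¹ * a⁻¹ :=
  calc (a * b)⁻¹ = ((a * b)⁻¹ * a) * a⁻¹ := (mul_inv_cancel_right a _).symm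
    _ = ((a * b)⁻¹ * ((a * b) * b⁻¹)) * a⁻¹ := by rw [mul_inv_cancel_right b a]
    _ = b⁻¹ * a⁻¹ := by rw [inv_mul_cancel_left]

lemma Lperm_inv (a : M) : Lperm a⁻¹ = (Lperm a)⁻¹ :=
  eq_inv_of_mul_eq_one_left (Equiv.ext (inv_mul_cancel_left a))

lemma Rperm_inv (a : M) : Rperm a⁻¹ = (Rperm a)⁻¹ :=
  eq_inv_of_mul_eq_one_left (Equiv.ext (mul_inv_cancel_right a))

end IPLoop

namespace Loop

section Basic

variable {M : Type*} [Loop M]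

lemma Lperm_one : Lperm (1 : M) = 1 := Equiv.ext Loop.one_mul

lemma Rperm_one : Rperm (1 : M) = 1 := Equiv.ext Loop.mul_one

@[simp] lemma pow_zero (x : M) : pow x 0 = 1 := rfl

@[simp] lemma pow_one (x : M) : pow x 1 = x := Loop.mul_one x

lemma zpow_Lperm_apply_pow (x : M) (a n : ℤ) : (Lperm x ^ a) (pow x n) = pow x (a + n) := by
  rw [pow, pow, ← Equiv.Perm.mul_apply, ← zpow_add]

end Basic

section PowerAlternative

variable {M : Type*} [IPLoop M] {x : M}

lemma pow_mul_pow_of_Lperm {p : ℤ} (hp : Lperm (pow x p) = Lperm x ^ p) (q : ℤ) :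
    pow x p * pow x q = pow x (p + q) :=
  (congrArg (· (pow x q)) hp).trans (zpow_Lperm_apply_pow x p q)

lemma inv_pow_of_Lperm {p : ℤ} (hp : Lperm (pow x p) = Lperm x ^ p) :
    (pow x p)⁻¹ = pow x (-p) :=
  IPLoop.inv_eq_of_mul_eq_one (by rw [pow_mul_pow_of_Lperm hp, add_neg_cancel, pow_zero])

lemma Lperm_pow_add_two_mul (hL : IsLeftARIF M) {p q : ℤ}
    (hp : Lperm (pow x p) = Lperm x ^ p) (hq : Lperm (pow x q) = Lperm x ^ q)
    (hpq : Lperm (pow x (2 * p + q)) = Lperm x ^ (2 * p + q)) :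
    Lperm (pow x (p + 2 * q)) = Lperm x ^ (p + 2 * q) := by
  have hba : pow x q * pow x p = pow x (p + q) := by rw [pow_mul_pow_of_Lperm hq, add_comm]
  have hbab : pow x q * pow x (p + q) = pow x (p + 2 * q) := by
    rw [pow_mul_pow_of_Lperm hq]; ring_nf
  have haba : pow x p * pow x (p + q) = pow x (2 * p + q) := by
    rw [pow_mul_pow_of_Lperm hp]; ring_nf
  have key : Lperm (pow x (p + 2 * q)) * Lperm (pow x p) =
      Lperm (pow x q) * Lperm (pow x (2 * p + q)) := by
    ext z
    have := hL (pow x p) (pow x q) z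
    rw [pow_mul_pow_of_Lperm hp, hba, hbab, haba] at this
    exact this
  rw [eq_mul_inv_of_mul_eq key, hp, hq, hpq]
  group

lemma Lperm_pow (hL : IsLeftARIF M) (x : M) (n : ℤ) : Lperm (pow x n) = Lperm x ^ n := by
  induction n using Int.forall_of_add_two_mul_closed with
  | h0 => rw [pow_zero, Lperm_one, zpow_zero]
  | h1 => rw [pow_one, zpow_one]
  | hneg k hk => rw [← inv_pow_of_Lperm hk, IPLoop.Lperm_inv, hk, zpow_neg]
  | hstep p q hp hq hpq => exact Lperm_pow_add_two_mul hL hp hq hpq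

lemma pow_mul_eq_zpow_Lperm_apply (hL : IsLeftARIF M) (x : M) (a : ℤ) (w : M) :
    pow x a * w = (Lperm x ^ a) w := by
  rw [← Lperm_pow hL]; rfl

lemma pow_mul_pow (hL : IsLeftARIF M) (x : M) (a b : ℤ) : pow x a * pow x b = pow x (a + b) :=
  pow_mul_pow_of_Lperm (Lperm_pow hL x a) b

lemma pow_mul_pow_mul (hL : IsLeftARIF M) (x : M) (a b : ℤ) (w : M) :
    pow x a * (pow x b * w) = pow x (a + b) * w := by
  simp only [pow_mul_eq_zpow_Lperm_apply hL, zpow_add, Equiv.Perm.mul_apply]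

lemma inv_pow (hL : IsLeftARIF M) (x : M) (a : ℤ) : (pow x a)⁻¹ = pow x (-a) :=
  inv_pow_of_Lperm (Lperm_pow hL x a)

lemma Rperm_pow_add_two_mul (hL : IsLeftARIF M) (hR : IsRightARIF M) {p q : ℤ}
    (hp : Rperm (pow x p) = Rperm x ^ p) (hq : Rperm (pow x q) = Rperm x ^ q)
    (hpq : Rperm (pow x (2 * p + q)) = Rperm x ^ (2 * p + q)) :
    Rperm (pow x (p + 2 * q)) = Rperm x ^ (p + 2 * q) := by
  have key : Rperm (pow x (p + 2 * q)) * Rperm (pow x p) =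
      Rperm (pow x q) * Rperm (pow x (2 * p + q)) := by
    ext z
    have := hR (pow x p) (pow x q) z
    rw [pow_mul_pow hL, pow_mul_pow hL, pow_mul_pow hL, pow_mul_pow hL,
      show q + (p + q) = p + 2 * q by ring, show p + (q + p) = 2 * p + q by ring] at this
    exact this
  rw [eq_mul_inv_of_mul_eq key, hp, hq, hpq]
  group

lemma Rperm_pow (hL : IsLeftARIF M) (hR : IsRightARIF M) (x : M) (n : ℤ) :
    Rperm (pow x n) = Rperm x ^ n := by
  induction n using Int.forall_of_add_two_mul_closed with
  | h0 => rw [pow_zero, Rperm_one, zpow_zero]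
  | h1 => rw [pow_one, zpow_one]
  | hneg k hk => rw [← inv_pow hL, IPLoop.Rperm_inv, hk, zpow_neg]
  | hstep p q hp hq hpq => exact Rperm_pow_add_two_mul hL hR hp hq hpq

lemma mul_pow_eq_zpow_Rperm_apply (hL : IsLeftARIF M) (hR : IsRightARIF M) (x : M) (a : ℤ)
    (w : M) : w * pow x a = (Rperm x ^ a) w := by
  rw [← Rperm_pow hL hR]; rfl

lemma mul_pow_mul_pow (hL : IsLeftARIF M) (hR : IsRightARIF M) (x : M) (a b : ℤ) (w : M) :
    (w * pow x a) * pow x b = w * pow x (a + b) := by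
  simp only [mul_pow_eq_zpow_Rperm_apply hL hR, add_comm a, zpow_add, Equiv.Perm.mul_apply]

lemma pow_mul_mul_pow (hM : IsARIF M) (x : M) (i j : ℤ) (w : M) :
    (pow x i * w) * pow x j = pow x i * (w * pow x j) := by
  have hcomm : Commute (Lperm x) (Rperm x) := Equiv.ext fun z => hM.flexible x z
  simp only [pow_mul_eq_zpow_Lperm_apply hM.left, mul_pow_eq_zpow_Rperm_apply hM.left hM.right,
    ← Equiv.Perm.mul_apply, (hcomm.zpow_zpow i j).eq]

end PowerAlternative

section Split

variable {M : Type*} [IPLoop M]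

lemma pow_inv (y : M) (n : ℤ) : pow y⁻¹ n = pow y (-n) := by
  rw [pow, pow, IPLoop.Lperm_inv, inv_zpow']

lemma inv_pow_mul_pow (hL : IsLeftARIF M) (x y : M) (a b : ℤ) :
    (pow x a * pow y b)⁻¹ = pow y (-b) * pow x (-a) := by
  rw [IPLoop.mul_inv_rev, inv_pow hL, inv_pow hL]

lemma pow_mul_pow_mul_pow_neg_mul_pow (hM : IsARIF M) (x y : M) (i m j : ℤ) :
    (pow x i * pow y m) * (pow y (-m) * pow x j) = pow x (i + j) := by
  have hL := hM.left
  have hu : (pow x j * pow y m) * pow y (-m) = pow x j := by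
    rw [mul_pow_mul_pow hL hM.right, add_neg_cancel, pow_zero, Loop.mul_one]
  have key := hM.right (pow x j * pow y m) (pow y (-m)) (pow x (i - j))
  rw [hM.flexible (pow x j * pow y m), hu, pow_mul_pow_mul hL, pow_mul_pow_mul hL,
    pow_mul_pow_mul hL, sub_add_cancel, mul_pow_mul_pow hL hM.right, add_neg_cancel, pow_zero,
    Loop.mul_one] at key
  exact key

def PowSplit (M : Type*) [IPLoop M] (m n : ℤ) : Prop :=
  ∀ (x y : M) (i j : ℤ),
    (pow x i * pow y m) * (pow y n * pow x j) = pow x i * (pow y (m + n) * pow x j)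

namespace PowSplit

lemma zero_left (n : ℤ) : PowSplit M 0 n := fun x y i j => by
  rw [pow_zero, Loop.mul_one, zero_add]

lemma zero_right (hM : IsARIF M) (m : ℤ) : PowSplit M m 0 := fun x y i j => by
  rw [pow_zero, Loop.one_mul, add_zero, pow_mul_mul_pow hM]

lemma add_neg_self (hM : IsARIF M) (m : ℤ) : PowSplit M m (-m) := fun x y i j => by
  rw [pow_mul_pow_mul_pow_neg_mul_pow hM, add_neg_cancel, pow_zero, Loop.one_mul,
    pow_mul_pow hM.left]

lemma neg {m n : ℤ} (h : PowSplit M m n) : PowSplit M (-m) (-n) := fun x y i j => by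
  simpa only [pow_inv, neg_neg, neg_add] using h x y⁻¹ i j

lemma neg_swap (hM : IsARIF M) {m n : ℤ} (h : PowSplit M m n) : PowSplit M (-n) (-m) :=
  fun x y i j => by
  have := congrArg (·⁻¹) (h x y (-j) (-i))
  simp only [IPLoop.mul_inv_rev, inv_pow_mul_pow hM.left, inv_pow hM.left, neg_neg] at this
  rw [this, ← pow_mul_mul_pow hM, neg_add, add_comm]

lemma swap (hM : IsARIF M) {m n : ℤ} (h : PowSplit M m n) : PowSplit M n m := by
  simpa only [neg_neg] using h.neg.neg_swap hM

lemma of_eq {m n m' n' : ℤ} (h : PowSplit M m n) (hm : m = m') (hn : n = n') :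
    PowSplit M m' n' :=
  hm ▸ hn ▸ h

lemma inv_mul (hL : IsLeftARIF M) {a b : ℤ} (h : PowSplit M a b) (x y : M) (i j : ℤ) :
    (pow y (-a) * pow x (-i)) * (pow x i * (pow y (a + b) * pow x j)) = pow y b * pow x j := by
  rw [← inv_pow_mul_pow hL, ← h, IPLoop.inv_mul_cancel_left]

lemma add_three (hM : IsARIF M) {m n : ℤ} (h₁ : PowSplit M (m + 1) n)
    (h₂ : PowSplit M m (n + 1)) (h₃ : PowSplit M (m + 2) (n + 1)) :
    PowSplit M (m + 3) n := fun x y i j => by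
  have hL := hM.left
  set u := pow y (-(m + 1)) * pow x (-i)
  set v := pow x i * pow y (m + 2)
  set z := pow x i * (pow y (m + n + 1) * pow x j)
  have huv : u * v = pow y 1 := by
    simpa only [neg_neg, show -(m + 1) + (m + 2) = 1 by ring]
      using pow_mul_pow_mul_pow_neg_mul_pow hM y x (-(m + 1)) (-i) (m + 2)
  have hv : v * (u * v) = pow x i * pow y (m + 3) := by
    rw [huv, mul_pow_mul_pow hL hM.right]; ring_nf
  have hu : u * (v * u) = pow y (-m) * pow x (-i) := by
    rw [hM.flexible, huv, pow_mul_pow_mul hL]; ring_nf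
  have huz : u * z = pow y n * pow x j := by
    have := h₁.inv_mul hL x y i j
    rwa [add_right_comm] at this
  have hvuz : (u * (v * u)) * z = pow y (n + 1) * pow x j := by
    have := h₂.inv_mul hL x y i j
    rw [hu]
    rwa [← add_assoc] at this
  have key := hL u v z
  rw [hv, huz, hvuz, h₃] at key
  rw [key]
  ring_nf

lemma level_add_two (hM : IsARIF M) {σ : ℤ} (h : ∀ m, PowSplit M m (σ - m)) (K : ℕ) :
    PowSplit M K (σ + 2 - K) := by
  induction K with
  | zero => exact (zero_left (σ + 2)).of_eq (by simp) (by simp)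
  | succ K ih =>
    exact (add_three hM (m := K - 2) (n := σ + 1 - K) ((h (K - 1)).of_eq (by ring) (by ring))
      ((h (K - 2)).of_eq rfl (by ring)) (ih.of_eq (by ring) (by ring))).of_eq (by push_cast; ring)
      (by push_cast; ring)

/-- Odd levels have no base case: level `-1` is taken from level `1` itself via `neg_swap`. -/
lemma level_one (hM : IsARIF M) (K : ℕ) : PowSplit M K (1 - K) ∧ PowSplit M (K + 1) (-K) := by
  induction K with
  | zero =>
    exact ⟨(zero_left 1).of_eq (by simp) (by simp), (zero_right hM 1).of_eq (by simp) (by simp)⟩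
  | succ K ih =>
    refine ⟨ih.2.of_eq (by push_cast; ring) (by push_cast; ring), ?_⟩
    exact (add_three hM (m := K - 1) (n := -K - 1)
      ((ih.2.neg_swap hM).of_eq (by ring) (by ring)) ((ih.1.neg_swap hM).of_eq (by ring) (by ring))
      (ih.2.of_eq (by ring) (by ring))).of_eq (by push_cast; ring) (by push_cast; ring)

lemma of_forall_nat (hM : IsARIF M) {σ : ℤ} (hσ : 0 ≤ σ) (h : ∀ K : ℕ, PowSplit M K (σ - K))
    (m : ℤ) : PowSplit M m (σ - m) := by
  rcases le_or_gt 0 m with hm | hm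
  · simpa [hm] using h m.toNat
  · exact (h (σ - m).toNat).swap hM |>.of_eq (by omega) (by omega)

lemma forall_nat_level (hM : IsARIF M) (σ K : ℕ) : PowSplit M K (σ - K) := by
  induction σ using Nat.twoStepInduction generalizing K with
  | zero => exact (add_neg_self hM _).of_eq rfl (by simp)
  | one => exact (level_one hM K).1.of_eq rfl (by simp)
  | more σ ih _ =>
    exact (level_add_two hM (of_forall_nat hM σ.cast_nonneg ih) K).of_eq rfl (by push_cast; ring)

end PowSplit

lemma powSplit (hM : IsARIF M) (m n : ℤ) : PowSplit M m n := by
  have key : ∀ m n : ℤ, 0 ≤ m + n → PowSplit M m n := fun m n h =>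
    (PowSplit.of_forall_nat hM h
      (fun K => (PowSplit.forall_nat_level hM (m + n).toNat K).of_eq rfl (by omega)) m).of_eq rfl
      (by ring)
  rcases le_or_gt 0 (m + n) with h | h
  · exact key m n h
  · exact (key (-m) (-n) (by omega)).neg.of_eq (neg_neg m) (neg_neg n)

end Split

end Loop

/-- In an ARIF loop, `(xⁱ·yᵐ)·(yⁿ·xʲ) = xⁱ·(y^{m+n}·xʲ)` for all integers
`i, j, m, n`. -/
theorem arif_3assoc {M : Type*} [IPLoop M]
    (hflex : ∀ x y : M, x * (y * x) = (x * y) * x)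
    (hW1 : ∀ x y z : M, (z * x) * (y * (x * y)) = (z * (x * (y * x))) * y)
    (hW2 : ∀ x y z : M, (y * (x * y)) * (x * z) = y * ((x * (y * x)) * z)) :
    ∀ (x y : M) (i j m n : ℤ),
      (Loop.pow x i * Loop.pow y m) * (Loop.pow y n * Loop.pow x j) =
        Loop.pow x i * (Loop.pow y (m + n) * Loop.pow x j) :=
  fun x y i j m n => Loop.powSplit ⟨hflex, hW1, hW2⟩ m n x y i j
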